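/- Let λ > 0 and s > 0 be real numbers. Then ∫₀^∞ e^{-st} · erfc( λ / (2√t) ) dt = e^{-λ√s} / s. (That is, the inverse Laplace transform of s ↦ e^{-λ√s}/s is the function t ↦ erfc(λ/(2√t)).) -/

import Mathlib

open MeasureTheory Set Real

open Filter intervalIntegral


lemma exp_Ioi (s b : ℝ) (hs : 0 < s) :
    ∫ t in Ioi b, Real.exp (-s * t) = Real.exp (-s * b) / s := by
  have hten : Tendsto (fun t : ℝ => -Real.exp (-s * t) / s) atTop (nhds 0) := by
    have h0 : Tendsto (fun t : ℝ => -s * t) atTop atBot := by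
      have h1 : Tendsto (fun t : ℝ => s * t) atTop atTop :=
        tendsto_id.const_mul_atTop hs
      simp only [neg_mul]
      exact tendsto_neg_atTop_atBot.comp h1
    have : Tendsto (fun t : ℝ => Real.exp (-s * t)) atTop (nhds 0) := by
      exact Real.tendsto_exp_atBot.comp h0
    simpa using this.neg.div_const s
  have h := integral_Ioi_of_hasDerivAt_of_tendsto' (a := b)
    (f := fun t => -Real.exp (-s * t) / s) (f' := fun t => Real.exp (-s * t))
    (fun x _ => by
      have h1 : HasDerivAt (fun t : ℝ => -s * t) (-s) x := by
        simpa using (hasDerivAt_id x).const_mul (-s)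
      have h2 := ((Real.hasDerivAt_exp _).comp x h1).neg.div_const s
      convert h2 using 1
      · rfl
      · rfl
      field_simp)
    (exp_neg_integrableOn_Ioi b hs) hten
  rw [h]; field_simp; ring

section Glasser
variable {a : ℝ}

noncomputable def gl (a : ℝ) : ℝ → ℝ := fun u => Real.exp (-(u^2 + a^2/u^2))

lemma gl_meas (a : ℝ) : Measurable (gl a) := by
  unfold gl
  apply Measurable.exp
  apply Measurable.neg
  exact (measurable_id.pow_const 2).add (measurable_const.div (measurable_id.pow_const 2))

lemma gl_nonneg (a : ℝ) (u : ℝ) : 0 ≤ gl a u := (Real.exp_pos _).le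

lemma gl_le_gauss (a : ℝ) (u : ℝ) : gl a u ≤ Real.exp (-u^2) := by
  apply Real.exp_le_exp.mpr
  have : 0 ≤ a^2/u^2 := div_nonneg (sq_nonneg a) (sq_nonneg u)
  linarith

lemma gl_le_one (a : ℝ) (u : ℝ) : gl a u ≤ 1 := by
  refine (gl_le_gauss a u).trans ?_
  rw [← Real.exp_zero]
  exact Real.exp_le_exp.mpr (by nlinarith [sq_nonneg u])

lemma gauss_integrable : Integrable (fun x : ℝ => Real.exp (-x^2)) := by
  have := integrable_exp_neg_mul_sq (b := 1) one_pos
  simpa using this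


lemma gl_integrableOn_Ioc (a c d : ℝ) : IntegrableOn (gl a) (Ioc c d) := by
  refine Integrable.mono' (g := fun _ => (1:ℝ))
    (integrableOn_const measure_Ioc_lt_top.ne)
    (gl_meas a).aestronglyMeasurable.restrict (ae_of_all _ fun u => ?_)
  rw [Real.norm_eq_abs, abs_of_nonneg (gl_nonneg a u)]
  exact gl_le_one a u

lemma gl_integrableOn_Ioi (a c : ℝ) : IntegrableOn (gl a) (Ioi c) := by
  refine Integrable.mono' gauss_integrable.integrableOn
    (gl_meas a).aestronglyMeasurable.restrict (ae_of_all _ fun u => ?_)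
  rw [Real.norm_eq_abs, abs_of_nonneg (gl_nonneg a u)]
  exact gl_le_gauss a u

lemma gl_mul_integrableOn_Ioi (ha : 0 < a) :
    IntegrableOn (fun w => a / w^2 * gl a w) (Ioi (Real.sqrt a)) := by
  have hr : 0 < Real.sqrt a := Real.sqrt_pos.mpr ha
  refine Integrable.mono' gauss_integrable.integrableOn
    ((measurable_const.div (measurable_id.pow_const 2)).mul
      (gl_meas a)).aestronglyMeasurable.restrict ?_
  refine (ae_restrict_iff' measurableSet_Ioi).mpr (ae_of_all _ fun w hw => ?_)
  have hw' : Real.sqrt a < w := hw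
  have hw0 : 0 < w := hr.trans hw'
  have h1 : a / w^2 ≤ 1 := by
    rw [div_le_one (by positivity)]
    calc a = Real.sqrt a ^ 2 := (Real.sq_sqrt ha.le).symm
    _ ≤ w^2 := by nlinarith
  have h0 : 0 ≤ a / w^2 := by positivity
  rw [Real.norm_eq_abs, abs_of_nonneg (mul_nonneg h0 (gl_nonneg a w))]
  calc a / w^2 * gl a w ≤ 1 * gl a w := by nlinarith [gl_nonneg a w]
  _ = gl a w := one_mul _
  _ ≤ _ := gl_le_gauss a w


lemma gl_contOn (a : ℝ) : ContinuousOn (gl a) {u : ℝ | u ≠ 0} := by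
  unfold gl
  apply Real.continuous_exp.comp_continuousOn
  apply ContinuousOn.neg
  exact ((continuous_pow 2).continuousOn).add
    (continuousOn_const.div ((continuous_pow 2).continuousOn) (fun x hx => pow_ne_zero 2 hx))

lemma gl_symm (ha : 0 < a) {x : ℝ} (hx : x ≠ 0) : gl a (a / x) = gl a x := by
  unfold gl
  congr 1
  field_simp
  ring

lemma gl_finite_sub (ha : 0 < a) {R : ℝ} (hR : Real.sqrt a ≤ R) :
    ∫ w in Real.sqrt a..R, a/w^2 * gl a w = ∫ u in (a/R)..(Real.sqrt a), gl a u := by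
  set r := Real.sqrt a with hrdef
  have hr : 0 < r := Real.sqrt_pos.mpr ha
  have hIcc : uIcc r R = Icc r R := uIcc_of_le hR
  have hpos : ∀ x ∈ uIcc r R, 0 < x := fun x hx => by
    rw [hIcc] at hx; exact hr.trans_le hx.1
  have h := integral_comp_smul_deriv' (f := fun w => a/w) (f' := fun w => -(a/w^2))
    (g := gl a) (a := r) (b := R)
    (fun x hx => by
      have hx0 : x ≠ 0 := (hpos x hx).ne'
      simpa [div_eq_mul_inv, mul_neg] using (hasDerivAt_inv hx0).const_mul a)
    (by
      apply ContinuousOn.neg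
      exact continuousOn_const.div ((continuous_pow 2).continuousOn)
        (fun x hx => pow_ne_zero 2 (hpos x hx).ne'))
    (by
      refine (gl_contOn a).mono ?_
      rintro _ ⟨x, hx, rfl⟩
      exact (div_pos ha (hpos x hx)).ne')
  have e1 : EqOn (fun x => (-(a/x^2)) • (gl a ∘ (fun w => a/w)) x)
      (fun x => -(a/x^2 * gl a x)) (uIcc r R) := fun x hx => by
    simp only [Function.comp, smul_eq_mul]
    rw [gl_symm ha (hpos x hx).ne']
    ring
  rw [intervalIntegral.integral_congr e1] at h
  have hfr : a / r = r := Real.div_sqrt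
  beta_reduce at h
  rw [hfr] at h
  rw [intervalIntegral.integral_neg] at h
  have := neg_eq_iff_eq_neg.mp h
  rw [this, ← intervalIntegral.integral_symm]

lemma gl_left (ha : 0 < a) :
    ∫ u in Ioc (0:ℝ) (Real.sqrt a), gl a u
      = ∫ w in Ioi (Real.sqrt a), a/w^2 * gl a w := by
  set r := Real.sqrt a with hrdef
  have hr : 0 < r := Real.sqrt_pos.mpr ha
  have t1 : Tendsto (fun R => ∫ w in r..R, a/w^2 * gl a w) atTop
      (nhds (∫ w in Ioi r, a/w^2 * gl a w)) :=
    intervalIntegral_tendsto_integral_Ioi r (gl_mul_integrableOn_Ioi ha) tendsto_id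
  have hii : ∀ x : ℝ, IntervalIntegrable (gl a) volume 0 x := fun x =>
    (intervalIntegrable_iff (μ := volume)).mpr (gl_integrableOn_Ioc a _ _)
  have key : ∀ᶠ R in atTop, ∫ w in r..R, a/w^2 * gl a w
      = (∫ u in (0:ℝ)..r, gl a u) - ∫ u in (0:ℝ)..(a/R), gl a u := by
    filter_upwards [eventually_ge_atTop r] with R hR
    rw [gl_finite_sub ha hR, ← intervalIntegral.integral_interval_sub_left (hii r) (hii (a/R))]
  have t3 : Tendsto (fun R : ℝ => ∫ u in (0:ℝ)..(a/R), gl a u) atTop (nhds 0) := by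
    apply squeeze_zero_norm' (a := fun R : ℝ => a / R)
    · filter_upwards [eventually_gt_atTop (0:ℝ)] with R hR
      have hb := intervalIntegral.norm_integral_le_of_norm_le_const (C := 1)
        (f := gl a) (a := (0:ℝ)) (b := a/R) (fun x _ => by
          rw [Real.norm_eq_abs, abs_of_nonneg (gl_nonneg a x)]; exact gl_le_one a x)
      calc ‖∫ u in (0:ℝ)..(a/R), gl a u‖ ≤ 1 * |a/R - 0| := hb
      _ = a / R := by rw [one_mul, sub_zero, abs_of_nonneg (by positivity)]
    · exact tendsto_const_nhds.div_atTop tendsto_id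
  have t2 : Tendsto (fun R : ℝ => (∫ u in (0:ℝ)..r, gl a u) - ∫ u in (0:ℝ)..(a/R), gl a u)
      atTop (nhds ((∫ u in (0:ℝ)..r, gl a u) - 0)) := tendsto_const_nhds.sub t3
  have hfin := tendsto_nhds_unique (t1.congr' key) t2
  rw [sub_zero] at hfin
  rw [← intervalIntegral.integral_of_le hr.le, hfin]


lemma gl_sub2 (ha : 0 < a) :
    ∫ w in Ioi (Real.sqrt a), Real.exp (-(w - a/w)^2) * (1 + a/w^2)
      = Real.sqrt Real.pi / 2 := by
  set r := Real.sqrt a with hrdef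
  have hr : 0 < r := Real.sqrt_pos.mpr ha
  have hr2 : r^2 = a := Real.sq_sqrt ha.le
  have hfr : r - a/r = 0 := by rw [Real.div_sqrt]; ring
  have hbnd : ∀ x : ℝ, r ≤ x → a/x ≤ r := by
    intro x hx
    rw [div_le_iff₀ (hr.trans_le hx)]
    nlinarith
  have h := integral_comp_mul_deriv_Ioi (f := fun w => w - a/w) (f' := fun w => 1 + a/w^2)
    (g := fun v => Real.exp (-v^2)) (a := r)
    (continuousOn_id.sub (continuousOn_const.div continuousOn_id
      (fun x hx => (hr.trans_le hx).ne')))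
    (by
      refine tendsto_atTop_mono' atTop ?_ (tendsto_atTop_add_const_right atTop (-r) tendsto_id)
      filter_upwards [eventually_ge_atTop r] with x hx
      have := hbnd x hx
      simp only [id_eq]
      linarith)
    (fun x hx => by
      have hx0 : x ≠ 0 := (hr.trans hx).ne'
      have hd : HasDerivAt (fun w : ℝ => w - a/w) (1 + a/x^2) x := by
        have := (hasDerivAt_id x).sub ((hasDerivAt_inv hx0).const_mul a)
        simpa [div_eq_mul_inv, mul_neg, sub_neg_eq_add, Pi.sub_def] using this
      exact hd.hasDerivWithinAt)
    ((Continuous.continuousOn (by continuity)))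
    (gauss_integrable.integrableOn)
    (by
      have hcont : ContinuousOn (fun x => ((fun v => Real.exp (-v^2)) ∘
          (fun w => w - a/w)) x * (1 + a/x^2)) (Ici r) := by
        apply ContinuousOn.mul
        · exact (Continuous.comp_continuousOn (by continuity)
            (continuousOn_id.sub (continuousOn_const.div continuousOn_id
              (fun x hx => (hr.trans_le hx).ne'))))
        · exact continuousOn_const.add (continuousOn_const.div
            ((continuous_pow 2).continuousOn) (fun x hx => pow_ne_zero 2 (hr.trans_le hx).ne'))
      have hdom : IntegrableOn (fun x : ℝ => 2 * Real.exp (-(x - r)^2)) (Ici r) := by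
        have h1 : Integrable (fun x : ℝ => Real.exp (-(x - r)^2)) := by
          have := gauss_integrable.comp_sub_right r
          simpa using this
        exact (h1.const_mul 2).integrableOn
      refine Integrable.mono' hdom (hcont.aestronglyMeasurable measurableSet_Ici) ?_
      refine (ae_restrict_iff' measurableSet_Ici).mpr (ae_of_all _ fun x hx => ?_)
      have hx' : r ≤ x := hx
      have hx0 : 0 < x := hr.trans_le hx'
      have h1 : a/x^2 ≤ 1 := by
        rw [div_le_one (by positivity)]
        nlinarith
      have h2 : 0 ≤ a/x^2 := by positivity
      have h3 : x - r ≤ x - a/x := by have := hbnd x hx'; linarith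
      have h4 : (0:ℝ) ≤ x - r := by linarith
      have h5 : (x - r)^2 ≤ (x - a/x)^2 := by nlinarith
      have h6 : Real.exp (-(x - a/x)^2) ≤ Real.exp (-(x - r)^2) :=
        Real.exp_le_exp.mpr (by linarith)
      have h2' : (0:ℝ) ≤ 1 + a/x^2 := by linarith
      simp only [Function.comp]
      rw [Real.norm_eq_abs, abs_of_nonneg (mul_nonneg (Real.exp_pos _).le h2')]
      nlinarith [Real.exp_pos (-(x - a/x)^2), Real.exp_pos (-(x - r)^2)]
    )
  simp only [Function.comp] at h
  beta_reduce at h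
  rw [hfr] at h
  rw [h]
  have := integral_gaussian_Ioi 1
  simp only [neg_mul, one_mul] at this
  rw [this]
  norm_num

lemma glasser (ha : 0 < a) :
    ∫ u in Ioi (0:ℝ), gl a u = Real.sqrt Real.pi / 2 * Real.exp (-(2*a)) := by
  set r := Real.sqrt a with hrdef
  have hr : 0 < r := Real.sqrt_pos.mpr ha
  have hexp : ∀ w : ℝ, w ≠ 0 → gl a w = Real.exp (-(2*a)) * Real.exp (-(w - a/w)^2) := by
    intro w hw
    unfold gl
    rw [← Real.exp_add]
    congr 1
    field_simp
    ring
  rw [← Ioc_union_Ioi_eq_Ioi hr.le,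
    setIntegral_union (Ioc_disjoint_Ioi le_rfl) measurableSet_Ioi
      (gl_integrableOn_Ioc a 0 r) (gl_integrableOn_Ioi a r),
    gl_left ha,
    ← integral_add (gl_mul_integrableOn_Ioi ha) (gl_integrableOn_Ioi a r)]
  have heq : EqOn (fun w => a/w^2 * gl a w + gl a w)
      (fun w => Real.exp (-(2*a)) * (Real.exp (-(w - a/w)^2) * (1 + a/w^2))) (Ioi r) := by
    intro w hw
    have hw0 : w ≠ 0 := (hr.trans hw).ne'
    simp only
    rw [hexp w hw0]
    ring
  rw [setIntegral_congr_fun measurableSet_Ioi heq, MeasureTheory.integral_const_mul, gl_sub2 ha]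
  ring

end Glasser

/-- The complementary error function `erfc(x) = (2/√π) ∫_x^∞ e^{-u²} du`. -/
noncomputable def erfc (x : ℝ) : ℝ :=
  (2 / Real.sqrt Real.pi) * ∫ u in Set.Ioi x, Real.exp (-u ^ 2)

/-- The inverse Laplace transform of `s ↦ e^{-λ√s}/s` is `t ↦ erfc(λ/(2√t))`:
for `λ, s > 0`, `∫₀^∞ e^{-st} erfc(λ/(2√t)) dt = e^{-λ√s}/s`. -/
theorem laplace_erfc (lam s : ℝ) (hlam : 0 < lam) (hs : 0 < s) :
    ∫ t in Ioi (0:ℝ), Real.exp (-s * t) * erfc (lam / (2 * Real.sqrt t))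
      = Real.exp (-lam * Real.sqrt s) / s := by
  have hpi : 0 < Real.sqrt Real.pi := Real.sqrt_pos.mpr Real.pi_pos
  set c : ℝ → ℝ := fun t => lam / (2 * Real.sqrt t) with hc
  set G : ℝ × ℝ → ℝ := fun p => Real.exp (-s * p.1) * Real.exp (-p.2^2) with hG
  set S : Set (ℝ × ℝ) := {p | 0 < p.1 ∧ c p.1 < p.2} with hS
  have hmc : Measurable c := by
    apply Measurable.div measurable_const
    exact Real.continuous_sqrt.measurable.const_mul 2
  have hmeasS : MeasurableSet S := by
    rw [hS, Set.setOf_and]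
    exact (measurableSet_lt measurable_const measurable_fst).inter
      (measurableSet_lt (hmc.comp measurable_fst) measurable_snd)
  have hmeasG : Measurable G := by
    rw [hG]; fun_prop
  have hGnonneg : ∀ p : ℝ × ℝ, 0 ≤ G p := fun p =>
    mul_nonneg (Real.exp_pos _).le (Real.exp_pos _).le
  -- membership characterization for u > 0
  have hiff : ∀ t u : ℝ, 0 < u → ((t, u) ∈ S ↔ lam^2/(4*u^2) < t) := by
    intro t u hu
    constructor
    · rintro ⟨ht, hcu⟩
      set q := Real.sqrt t with hq
      have hq0 : 0 < q := Real.sqrt_pos.mpr ht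
      have hq2 : q^2 = t := Real.sq_sqrt ht.le
      rw [hc] at hcu
      have h1 : lam < u * (2 * q) := (div_lt_iff₀ (by positivity)).mp hcu
      rw [div_lt_iff₀ (by positivity), ← hq2]
      nlinarith [mul_pos (sub_pos.mpr h1) (show (0:ℝ) < u * (2 * q) + lam by positivity)]
    · intro ht'
      have hb0 : 0 < lam^2/(4*u^2) := by positivity
      have ht : 0 < t := hb0.trans ht'
      refine ⟨ht, ?_⟩
      set q := Real.sqrt t with hq
      have hq0 : 0 < q := Real.sqrt_pos.mpr ht
      have hq2 : q^2 = t := Real.sq_sqrt ht.le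
      have h2 : lam^2 < t * (4*u^2) := (div_lt_iff₀ (by positivity)).mp ht'
      rw [← hq2] at h2
      have h3 : lam < 2*u*q := by
        have h4 := Real.sqrt_lt_sqrt (sq_nonneg lam) (show lam^2 < (2*u*q)^2 by nlinarith)
        rwa [Real.sqrt_sq hlam.le, Real.sqrt_sq (by positivity)] at h4
      rw [hc]
      rw [div_lt_iff₀ (by positivity)]
      show lam < u * (2 * q)
      linarith
  -- integrability of the indicator function on the product space
  have hf1 : Integrable ((Ioi (0:ℝ)).indicator (fun t => Real.exp (-s*t))) :=
    (exp_neg_integrableOn_Ioi 0 hs).integrable_indicator measurableSet_Ioi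
  have hInt : Integrable (fun p : ℝ × ℝ => S.indicator G p) (volume.prod volume) := by
    have hprod := hf1.mul_prod gauss_integrable
    refine hprod.mono' ((hmeasG.indicator hmeasS).aestronglyMeasurable) (ae_of_all _ fun p => ?_)
    by_cases hp : p ∈ S
    · rw [indicator_of_mem hp, Real.norm_eq_abs, abs_of_nonneg (hGnonneg p)]
      rw [indicator_of_mem (show p.1 ∈ Ioi (0:ℝ) from hp.1)]
    · rw [indicator_of_notMem hp]
      simp only [norm_zero]
      apply mul_nonneg _ (Real.exp_pos _).le
      exact indicator_nonneg (fun t _ => (Real.exp_pos _).le) _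
  -- left marginal
  have hL : ∀ t : ℝ, (∫ u, S.indicator G (t, u))
      = (Ioi (0:ℝ)).indicator
        (fun t => Real.exp (-s*t) * ∫ u in Ioi (c t), Real.exp (-u^2)) t := by
    intro t
    by_cases ht : 0 < t
    · have hset : (fun u => S.indicator G (t, u))
          = (Ioi (c t)).indicator (fun u => Real.exp (-s*t) * Real.exp (-u^2)) := by
        funext u
        by_cases hu : c t < u
        · rw [indicator_of_mem (show (t,u) ∈ S from ⟨ht, hu⟩),
            indicator_of_mem (show u ∈ Ioi (c t) from hu)]
        · rw [indicator_of_notMem (show (t,u) ∉ S from fun h => hu h.2),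
            indicator_of_notMem (show u ∉ Ioi (c t) from hu)]
      rw [hset, MeasureTheory.integral_indicator measurableSet_Ioi, MeasureTheory.integral_const_mul,
        indicator_of_mem (show t ∈ Ioi (0:ℝ) from ht)]
    · have hset : (fun u => S.indicator G (t, u)) = fun _ => (0:ℝ) := by
        funext u
        exact indicator_of_notMem (fun h => ht h.1) _
      rw [hset, indicator_of_notMem (show t ∉ Ioi (0:ℝ) from ht)]
      simp
  -- right marginal
  have hR : ∀ u : ℝ, (∫ t, S.indicator G (t, u))
      = (Ioi (0:ℝ)).indicator
        (fun u => Real.exp (-u^2) * (Real.exp (-s * (lam^2/(4*u^2)))/s)) u := by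
    intro u
    by_cases hu : 0 < u
    · have hset : (fun t => S.indicator G (t, u))
          = (Ioi (lam^2/(4*u^2))).indicator
            (fun t => Real.exp (-u^2) * Real.exp (-s*t)) := by
        funext t
        by_cases ht : lam^2/(4*u^2) < t
        · rw [indicator_of_mem ((hiff t u hu).mpr ht),
            indicator_of_mem (show t ∈ Ioi (lam^2/(4*u^2)) from ht)]
          rw [hG]; ring
        · rw [indicator_of_notMem (fun h => ht ((hiff t u hu).mp h)),
            indicator_of_notMem (show t ∉ Ioi (lam^2/(4*u^2)) from ht)]
      rw [hset, MeasureTheory.integral_indicator measurableSet_Ioi, MeasureTheory.integral_const_mul,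
        exp_Ioi s _ hs, indicator_of_mem (show u ∈ Ioi (0:ℝ) from hu)]
    · have hset : (fun t => S.indicator G (t, u)) = fun _ => (0:ℝ) := by
        funext t
        refine indicator_of_notMem (fun h => ?_) _
        have h1 : 0 < c t := by
          rw [hc]
          exact div_pos hlam (mul_pos two_pos (Real.sqrt_pos.mpr h.1))
        exact hu (h1.trans h.2)
      rw [hset, indicator_of_notMem (show u ∉ Ioi (0:ℝ) from hu)]
      simp
  -- Fubini
  have hswap := integral_integral_swap (f := fun t u => S.indicator G (t, u)) hInt
  -- assemble
  set a : ℝ := lam * Real.sqrt s / 2 with ha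
  have ha0 : 0 < a := by positivity
  have ha2 : a^2 = lam^2 * s / 4 := by
    rw [ha, div_pow, mul_pow, Real.sq_sqrt hs.le]
    norm_num
  have hgl : ∀ u : ℝ, u ∈ Ioi (0:ℝ) →
      Real.exp (-u^2) * (Real.exp (-s * (lam^2/(4*u^2)))/s) = (1/s) * gl a u := by
    intro u hu
    have hu0 : (u:ℝ) ≠ 0 := (mem_Ioi.mp hu).ne'
    have h5 : -u^2 + -s * (lam^2/(4*u^2)) = -(u^2 + a^2/u^2) := by
      rw [ha2]; field_simp; ring
    calc Real.exp (-u^2) * (Real.exp (-s * (lam^2/(4*u^2)))/s)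
        = (1/s) * Real.exp (-u^2 + -s * (lam^2/(4*u^2))) := by
          rw [Real.exp_add]; ring
      _ = (1/s) * gl a u := by
          show _ = (1/s) * Real.exp (-(u^2 + a^2/u^2))
          rw [h5]
  have hswap' : (∫ t, ∫ u, S.indicator G (t, u)) = ∫ u, ∫ t, S.indicator G (t, u) := hswap
  calc ∫ t in Ioi (0:ℝ), Real.exp (-s * t) * erfc (c t)
      = ∫ t in Ioi (0:ℝ), (2/Real.sqrt Real.pi) *
          (Real.exp (-s*t) * ∫ u in Ioi (c t), Real.exp (-u^2)) := by
        refine setIntegral_congr_fun measurableSet_Ioi (fun t _ => ?_)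
        rw [erfc]
        ring
    _ = (2/Real.sqrt Real.pi) * ∫ t, (Ioi (0:ℝ)).indicator
          (fun t => Real.exp (-s*t) * ∫ u in Ioi (c t), Real.exp (-u^2)) t := by
        rw [MeasureTheory.integral_const_mul, ← MeasureTheory.integral_indicator measurableSet_Ioi]
    _ = (2/Real.sqrt Real.pi) * ∫ t, ∫ u, S.indicator G (t, u) := by
        congr 1
        exact integral_congr_ae (ae_of_all _ fun t => (hL t).symm)
    _ = (2/Real.sqrt Real.pi) * ∫ u, ∫ t, S.indicator G (t, u) := by rw [hswap']
    _ = (2/Real.sqrt Real.pi) * ∫ u in Ioi (0:ℝ),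
          Real.exp (-u^2) * (Real.exp (-s * (lam^2/(4*u^2)))/s) := by
        rw [← MeasureTheory.integral_indicator measurableSet_Ioi]
        congr 1
        exact integral_congr_ae (ae_of_all _ fun u => hR u)
    _ = (2/Real.sqrt Real.pi) * ∫ u in Ioi (0:ℝ), (1/s) * gl a u := by
        congr 1
        exact setIntegral_congr_fun measurableSet_Ioi hgl
    _ = (2/Real.sqrt Real.pi) * ((1/s) * (Real.sqrt Real.pi / 2 * Real.exp (-(2*a)))) := by
        rw [MeasureTheory.integral_const_mul, glasser ha0]
    _ = Real.exp (-lam * Real.sqrt s) / s := by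
        have h2a : 2*a = lam * Real.sqrt s := by rw [ha]; ring
        rw [h2a, neg_mul]
        field_simp
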